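/- Let $f(x) = x^3 + \alpha x + \beta \in \mathbb{Q}_3[x]$ be an irreducible depressed cubic generating a ramified Galois extension $\mathbb{Q}_3(\theta)/\mathbb{Q}_3$, with $v_3(\beta) \equiv 0 \pmod 3$, unit part $u$ of $\beta$ satisfying $u \equiv 1 \pmod 9$, and let $w$ be the unit part of $\alpha$. Then $N_{\mathbb{Q}_3(\theta)/\mathbb{Q}_3}(\theta + 3^m) \cdot 3^{-3m} = 1 - u + 3w$ where $m = v_3(\beta)/3$, and $1 - u + 3w$ has valuation exactly 1 (hence is not a cube in $\mathbb{Q}_3$). -/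

import Mathlib

/-!
With `σ` a generator of the cyclic Galois group, `N x = x · σx · σ²x`, and
`N(θ + λ) = λ³ + αλ - β` is the norm identity. The content is `v₃ α = 2m + 1`: then `w` is a unit
and `1 - u + 3w ≡ 3w (mod 9)` has valuation `1`.

Every absolute value on `L` extending that of `ℚ₃` is the spectral norm, hence `σ`-invariant, so
`v (N x) = 3 v x`; with `N θ = -β` this gives `v θ = m`, and the equation of `θ` then gives
`v₃ α ≥ 2m`. The discriminant `-(4α³ + 27β²) = N(θ - σθ)²` has even valuation, which excludes
`α = 0` and `v₃ α ≥ 2m + 2`. If `v₃ α = 2m`, then `η = θ / 3^m` is a root of `X³ + AX + u` with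
`A` and `u` units: for `A ≡ 1 (mod 3)` Hensel's lemma gives a root of `f` in `ℚ₃`, and for
`A ≡ -1` the norm form of `ℤ₃[η]` is anisotropic modulo `3`, so every `v x` is an integer and
`L/ℚ₃` would be unramified.
-/

open Polynomial Module

theorem algebra_adjoin_eq_top_of_adjoin_eq_top {K L : Type*} [Field K] [Field L] [Algebra K L]
    [Algebra.IsAlgebraic K L] {θ : L} (hgen : IntermediateField.adjoin K {θ} = ⊤) :
    Algebra.adjoin K {θ} = ⊤ := by
  rw [← IntermediateField.adjoin_simple_toSubalgebra_of_isAlgebraic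
    (Algebra.IsAlgebraic.isAlgebraic θ), hgen, IntermediateField.top_toSubalgebra]

theorem apply_ne_self_of_adjoin_eq_top {K L : Type*} [Field K] [Field L] [Algebra K L]
    [Algebra.IsAlgebraic K L] {σ : L ≃ₐ[K] L} (hσ : σ ≠ 1) {θ : L}
    (hgen : IntermediateField.adjoin K {θ} = ⊤) : σ θ ≠ θ := by
  intro h
  refine hσ (AlgEquiv.coe_toAlgHom_injective
    (AlgHom.ext_of_adjoin_eq_top (algebra_adjoin_eq_top_of_adjoin_eq_top hgen) ?_))
  simpa using h

theorem exists_algEquiv_ne_one {K L : Type*} [Field K] [Field L] [Algebra K L]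
    [FiniteDimensional K L] [IsGalois K L] (h : 1 < finrank K L) : ∃ σ : Gal(L/K), σ ≠ 1 := by
  have : Nontrivial Gal(L/K) := by
    rwa [← Finite.one_lt_card_iff_nontrivial, IsGalois.card_aut_eq_finrank]
  exact exists_ne 1

theorem not_isRoot_of_irreducible_cubic {K : Type*} [Field K] {α β : K}
    (hirr : Irreducible (X ^ 3 + C α * X + C β)) (r : K) : r ^ 3 + α * r + β ≠ 0 := by
  intro h
  have h1 := degree_eq_one_of_irreducible_of_root hirr (x := r) (by simpa using h)
  have h3 : (X ^ 3 + C α * X + C β).degree = 3 := by compute_degree!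
  rw [h3] at h1
  exact absurd h1 (by decide)

theorem finrank_eq_three_of_irreducible_cubic {K L : Type*} [Field K] [Field L] [Algebra K L]
    {α β : K} (hirr : Irreducible (X ^ 3 + C α * X + C β)) {θ : L}
    (hroot : aeval θ (X ^ 3 + C α * X + C β) = 0) (hgen : IntermediateField.adjoin K {θ} = ⊤) :
    finrank K L = 3 := by
  have hmonic : (X ^ 3 + C α * X + C β).Monic := by monicity!
  rw [← IntermediateField.finrank_top', ← hgen,
    IntermediateField.adjoin.finrank ⟨_, hmonic, by rwa [← aeval_def]⟩,
    ← minpoly.eq_of_irreducible_of_monic hirr hroot hmonic]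
  compute_degree!

theorem exists_eq_add_mul_add_mul_sq {K L : Type*} [Field K] [Field L] [Algebra K L]
    [Algebra.IsAlgebraic K L] {α β : K} {θ : L}
    (hθ : θ ^ 3 + algebraMap K L α * θ + algebraMap K L β = 0)
    (hgen : IntermediateField.adjoin K {θ} = ⊤) (x : L) :
    ∃ a b c : K, x = algebraMap K L a + algebraMap K L b * θ + algebraMap K L c * θ ^ 2 := by
  have hg : (X ^ 3 + C α * X + C β).Monic := by monicity!
  have hdeg : (X ^ 3 + C α * X + C β).natDegree = 3 := by compute_degree!
  have hgθ : aeval θ (X ^ 3 + C α * X + C β) = 0 := by simpa using hθ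
  have hx : x ∈ (aeval (R := K) θ).range := by
    rw [← Algebra.adjoin_singleton_eq_range_aeval, algebra_adjoin_eq_top_of_adjoin_eq_top hgen]
    trivial
  obtain ⟨P, hP⟩ := hx
  rw [← show aeval θ P = x from hP, ← aeval_modByMonic_eq_self_of_root hgθ,
    aeval_eq_sum_range' ((natDegree_modByMonic_lt P hg fun h => by simp [h] at hdeg).trans_eq hdeg)]
  generalize P %ₘ (X ^ 3 + C α * X + C β) = R
  refine ⟨R.coeff 0, R.coeff 1, R.coeff 2, ?_⟩
  simp only [Finset.sum_range_succ, Finset.sum_range_zero, Algebra.smul_def, pow_zero, pow_one,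
    mul_one, zero_add]

theorem cubic_root_relations {R : Type*} [CommRing R] [IsDomain R] {a b r s t : R}
    (hr : r ^ 3 + a * r + b = 0) (hs : s ^ 3 + a * s + b = 0) (ht : t ^ 3 + a * t + b = 0)
    (hrs : r ≠ s) (hrt : r ≠ t) (hst : s ≠ t) :
    t = -r - s ∧ a = r * s - (r + s) ^ 2 ∧ b = r * s * (r + s) := by
  have hrs' : r ^ 2 + r * s + s ^ 2 + a = 0 :=
    (mul_eq_zero.mp (by linear_combination hr - hs : (r - s) * (r ^ 2 + r * s + s ^ 2 + a) = 0)
      ).resolve_left (sub_ne_zero.mpr hrs)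
  have hrt' : r ^ 2 + r * t + t ^ 2 + a = 0 :=
    (mul_eq_zero.mp (by linear_combination hr - ht : (r - t) * (r ^ 2 + r * t + t ^ 2 + a) = 0)
      ).resolve_left (sub_ne_zero.mpr hrt)
  have hsum : r + s + t = 0 :=
    (mul_eq_zero.mp (by linear_combination hrs' - hrt' : (s - t) * (r + s + t) = 0)
      ).resolve_left (sub_ne_zero.mpr hst)
  exact ⟨by linear_combination hsum, by linear_combination hrs',
    by linear_combination hr - r * hrs'⟩

/-- The norm form of `R[X]/(X³ + AX + u)` in the coordinates `a + bX + cX²`. -/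
def cubicNormForm {R : Type*} [CommRing R] (A u a b c : R) : R :=
  a ^ 3 - u * b ^ 3 + u ^ 2 * c ^ 3 - 2 * A * a ^ 2 * c + A * a * b ^ 2 + A ^ 2 * a * c ^ 2
    + 3 * u * a * b * c - A * u * b * c ^ 2

theorem map_cubicNormForm {R S : Type*} [CommRing R] [CommRing S] (f : R →+* S) (A u a b c : R) :
    f (cubicNormForm A u a b c) = cubicNormForm (f A) (f u) (f a) (f b) (f c) := by
  simp [cubicNormForm, map_ofNat]

/-- `X³ - X + 1` is irreducible over `𝔽₃`, so this is the norm form of `𝔽₂₇ / 𝔽₃`. -/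
theorem cubicNormForm_anisotropic_zmod_three :
    ∀ a b c : ZMod 3, cubicNormForm (-1) 1 a b c = 0 → a = 0 ∧ b = 0 ∧ c = 0 := by
  unfold cubicNormForm
  decide

section CyclicCubic

variable {K L : Type*} [Field K] [Field L] [Algebra K L] [FiniteDimensional K L] [IsGalois K L]

theorem orderOf_eq_three (hL : finrank K L = 3) {σ : Gal(L/K)} (hσ : σ ≠ 1) : orderOf σ = 3 := by
  have hdvd := orderOf_dvd_natCard σ
  rw [IsGalois.card_aut_eq_finrank, hL] at hdvd
  exact (Nat.prime_three.eq_one_or_self_of_dvd _ hdvd).resolve_left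
    fun h => hσ (orderOf_eq_one_iff.mp h)

theorem algebraMap_norm_eq_mul_mul (hL : finrank K L = 3) {σ : Gal(L/K)} (hσ : σ ≠ 1) (x : L) :
    algebraMap K L (Algebra.norm K x) = x * σ x * σ (σ x) := by
  have hord := orderOf_eq_three hL hσ
  have hbij : Function.Bijective fun i : Fin 3 => σ ^ (i : ℕ) := by
    refine (Fintype.bijective_iff_injective_and_card _).mpr
      ⟨fun i j h => Fin.ext (pow_injOn_Iio_orderOf ?_ ?_ h), ?_⟩
    · simp [hord]
    · simp [hord]
    · rw [Fintype.card_fin, Fintype.card_eq_nat_card, IsGalois.card_aut_eq_finrank, hL]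
  rw [Algebra.norm_eq_prod_automorphisms,
    ← Fintype.prod_bijective _ hbij (fun i => (σ ^ (i : ℕ)) x) _ fun _ => rfl, Fin.prod_univ_three]
  simp [pow_succ, AlgEquiv.mul_apply]

variable {σ : Gal(L/K)} {α β : K} {θ : L}

theorem conj_root_relations (hL : finrank K L = 3) (hσ : σ ≠ 1)
    (hθ : θ ^ 3 + algebraMap K L α * θ + algebraMap K L β = 0) (hσθ : σ θ ≠ θ) :
    σ (σ θ) = -θ - σ θ ∧ algebraMap K L α = θ * σ θ - (θ + σ θ) ^ 2 ∧
      algebraMap K L β = θ * σ θ * (θ + σ θ) := by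
  have hσ3 : σ (σ (σ θ)) = θ := by
    have := pow_orderOf_eq_one σ
    rw [orderOf_eq_three hL hσ] at this
    simpa [pow_succ, AlgEquiv.mul_apply] using congr($this θ)
  have hconj : ∀ x : L, x ^ 3 + algebraMap K L α * x + algebraMap K L β = 0 →
      σ x ^ 3 + algebraMap K L α * σ x + algebraMap K L β = 0 := fun x hx => by
    simpa using congr(σ $hx)
  have h1 := hconj θ hθ
  exact cubic_root_relations hθ h1 (hconj _ h1) hσθ.symm
    (fun h => hσθ ((congrArg σ h).trans hσ3)) fun h => hσθ (σ.injective h.symm)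

theorem norm_root_add_algebraMap (hL : finrank K L = 3) (hσ : σ ≠ 1)
    (hθ : θ ^ 3 + algebraMap K L α * θ + algebraMap K L β = 0) (hσθ : σ θ ≠ θ) (lam : K) :
    Algebra.norm K (θ + algebraMap K L lam) = lam ^ 3 + α * lam - β := by
  obtain ⟨h3, hα, hβ⟩ := conj_root_relations hL hσ hθ hσθ
  apply (algebraMap K L).injective
  rw [algebraMap_norm_eq_mul_mul hL hσ]
  simp only [map_add, map_sub, map_mul, map_pow, AlgEquiv.commutes, h3, hα, hβ]
  ring

theorem norm_root_sub_conj_sq (hL : finrank K L = 3) (hσ : σ ≠ 1)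
    (hθ : θ ^ 3 + algebraMap K L α * θ + algebraMap K L β = 0) (hσθ : σ θ ≠ θ) :
    Algebra.norm K (θ - σ θ) ^ 2 = -(4 * α ^ 3 + 27 * β ^ 2) := by
  obtain ⟨h3, hα, hβ⟩ := conj_root_relations hL hσ hθ hσθ
  apply (algebraMap K L).injective
  rw [map_pow, algebraMap_norm_eq_mul_mul hL hσ]
  simp only [map_add, map_sub, map_neg, map_mul, map_pow, map_ofNat, h3, hα, hβ]
  ring

theorem norm_eq_cubicNormForm (hL : finrank K L = 3) (hσ : σ ≠ 1)
    (hθ : θ ^ 3 + algebraMap K L α * θ + algebraMap K L β = 0) (hσθ : σ θ ≠ θ) (a b c : K) :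
    Algebra.norm K (algebraMap K L a + algebraMap K L b * θ + algebraMap K L c * θ ^ 2) =
      cubicNormForm α β a b c := by
  obtain ⟨h3, hα, hβ⟩ := conj_root_relations hL hσ hθ hσθ
  apply (algebraMap K L).injective
  rw [algebraMap_norm_eq_mul_mul hL hσ, cubicNormForm]
  simp only [map_add, map_sub, map_mul, map_pow, map_ofNat, AlgEquiv.commutes, h3, hα, hβ]
  ring

end CyclicCubic

namespace Padic

variable {p : ℕ} [Fact p.Prime]

theorem valuation_neg (x : ℚ_[p]) : (-x).valuation = x.valuation := by
  rcases eq_or_ne x 0 with rfl | hx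
  · simp
  have hp : (1 : ℝ) < p := mod_cast (Fact.out : p.Prime).one_lt
  have h := norm_neg x
  rwa [norm_eq_zpow_neg_valuation (neg_ne_zero.mpr hx), norm_eq_zpow_neg_valuation hx,
    zpow_right_inj₀ (by linarith) hp.ne', neg_inj] at h

theorem valuation_add_eq_of_lt {x y : ℚ_[p]} (hx : x ≠ 0) (h : x.valuation < y.valuation) :
    (x + y).valuation = x.valuation := by
  have hxy : x + y ≠ 0 := by
    intro h0
    rw [eq_neg_of_add_eq_zero_right h0, valuation_neg] at h
    exact lt_irrefl _ h
  have hle := le_valuation_add hxy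
  have hge := le_valuation_add (x := x + y) (y := -y) (by simpa using hx)
  rw [add_neg_cancel_right, valuation_neg] at hge
  rw [min_eq_left h.le] at hle
  exact le_antisymm (by rw [min_le_iff] at hge; omega) hle

theorem norm_eq_one_iff_valuation_eq_zero {x : ℚ_[p]} (hx : x ≠ 0) :
    ‖x‖ = 1 ↔ x.valuation = 0 := by
  have hp : (1 : ℝ) < p := mod_cast (Fact.out : p.Prime).one_lt
  rw [norm_eq_zpow_neg_valuation hx, zpow_eq_one_iff_right₀ (by linarith) hp.ne', neg_eq_zero]

theorem norm_div_zpow_valuation {x : ℚ_[p]} (hx : x ≠ 0) :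
    ‖x / (p : ℚ_[p]) ^ x.valuation‖ = 1 := by
  have hp : (p : ℚ_[p]) ^ x.valuation ≠ 0 := zpow_ne_zero _ (by simp [(Fact.out : p.Prime).ne_zero])
  rw [norm_eq_one_iff_valuation_eq_zero (div_ne_zero hx hp), div_eq_mul_inv,
    valuation_mul hx (inv_ne_zero hp)]
  simp

theorem exists_eq_mul_padicInt {a b c : ℚ_[p]} (h : a ≠ 0 ∨ b ≠ 0 ∨ c ≠ 0) :
    ∃ z ≠ 0, ∃ a' b' c' : ℤ_[p], a = z * a' ∧ b = z * b' ∧ c = z * c' ∧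
      (a' = 1 ∨ b' = 1 ∨ c' = 1) := by
  wlog hba : ‖b‖ ≤ ‖a‖ generalizing a b c
  · obtain ⟨z, hz, b', a', c', hb, ha, hc, h1⟩ :=
      this (a := b) (b := a) (c := c) (by tauto) (not_le.mp hba).le
    exact ⟨z, hz, a', b', c', ha, hb, hc, by tauto⟩
  wlog hca : ‖c‖ ≤ ‖a‖ generalizing a b c
  · obtain ⟨z, hz, c', b', a', hc, hb, ha, h1⟩ :=
      this (a := c) (b := b) (c := a) (by tauto) (hba.trans (not_le.mp hca).le) (not_le.mp hca).le
    exact ⟨z, hz, a', b', c', ha, hb, hc, by tauto⟩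
  have ha : a ≠ 0 := by
    rintro rfl
    simp only [norm_zero, norm_le_zero_iff] at hba hca
    tauto
  have hdiv : ∀ x : ℚ_[p], ‖x‖ ≤ ‖a‖ → ‖x / a‖ ≤ 1 := fun x hx => by
    rw [norm_div]
    exact div_le_one_of_le₀ hx (norm_nonneg a)
  refine ⟨a, ha, 1, ⟨b / a, hdiv b hba⟩, ⟨c / a, hdiv c hca⟩, ?_, ?_, ?_, Or.inl rfl⟩ <;>
    simp [mul_div_cancel₀ _ ha]

theorem valuation_le_of_sq_eq_neg_disc {α β d : ℚ_[3]} {m : ℤ}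
    (hd : d ^ 2 = -(4 * α ^ 3 + 27 * β ^ 2)) (hβ0 : β ≠ 0) (hβ : β.valuation = 3 * m) :
    α ≠ 0 ∧ α.valuation ≤ 2 * m + 1 := by
  by_contra! hα
  have h27 : (27 * β ^ 2).valuation = 6 * m + 3 := by
    rw [show (27 : ℚ_[3]) = 3 ^ 3 by norm_num, valuation_mul (by norm_num) (by simpa using hβ0)]
    simp [hβ]
    ring
  have hdisc : (27 * β ^ 2 + 4 * α ^ 3).valuation = 6 * m + 3 := by
    rcases eq_or_ne α 0 with rfl | hα0
    · simpa using h27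
    rw [valuation_add_eq_of_lt (by simpa using hβ0) _, h27]
    rw [h27, valuation_mul (by norm_num) (by simpa using hα0)]
    simp
    linarith [hα hα0]
  have := congrArg valuation hd
  rw [valuation_pow, show -(4 * α ^ 3 + 27 * β ^ 2) = -(27 * β ^ 2 + 4 * α ^ 3) by ring,
    valuation_neg, hdisc] at this
  omega

theorem valuation_three_mul_add_nine_mul {w : ℚ_[3]} (hw : ‖w‖ = 1) (c : ℤ_[3]) :
    (3 * w + 9 * c).valuation = 1 := by
  have hw0 : w ≠ 0 := by rintro rfl; simp at hw
  have h3w : (3 * w).valuation = 1 := by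
    rw [valuation_mul (by norm_num) hw0, (norm_eq_one_iff_valuation_eq_zero hw0).mp hw]
    simp
  rcases eq_or_ne (c : ℚ_[3]) 0 with hc | hc
  · simpa [hc] using h3w
  rw [valuation_add_eq_of_lt (mul_ne_zero (by norm_num) hw0), h3w]
  rw [h3w, valuation_mul (by norm_num) hc, show (9 : ℚ_[3]) = 3 ^ 2 by norm_num]
  simp
  omega

end Padic

namespace PadicInt

variable {p : ℕ} [Fact p.Prime]

theorem norm_lt_one_iff_toZMod_eq_zero {x : ℤ_[p]} : ‖x‖ < 1 ↔ toZMod x = 0 := by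
  rw [← RingHom.mem_ker, ker_toZMod, IsLocalRing.mem_maximalIdeal, mem_nonunits]

theorem norm_eq_one_of_toZMod_ne_zero {x : ℤ_[p]} (hx : toZMod x ≠ 0) : ‖x‖ = 1 :=
  (norm_le_one x).eq_or_lt.resolve_right (mt norm_lt_one_iff_toZMod_eq_zero.mp hx)

end PadicInt

theorem exists_root_of_toZMod_eq_one {A u : ℤ_[3]} (hA : PadicInt.toZMod A = 1)
    (hu : PadicInt.toZMod u = 1) : ∃ z : ℤ_[3], z ^ 3 + A * z + u = 0 := by
  have hval : ‖1 + A + u‖ < 1 := by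
    rw [PadicInt.norm_lt_one_iff_toZMod_eq_zero, map_add, map_add, map_one, hA, hu]
    decide
  have hder : ‖3 + A‖ = 1 := by
    refine PadicInt.norm_eq_one_of_toZMod_ne_zero ?_
    rw [map_add, map_ofNat, hA]
    decide
  set F : ℤ_[3][X] := X ^ 3 + C A * X + C u
  have hF : aeval 1 F = 1 + A + u := by simp [F, add_assoc]
  have hF' : aeval 1 (derivative F) = 3 + A := by
    simp only [F, derivative_X_pow_succ, Nat.cast_ofNat, map_add, map_one, derivative_mul,
      derivative_C, zero_mul, derivative_X, mul_one, zero_add, add_zero, coe_aeval_eq_eval,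
      eval_add, eval_mul, eval_C, eval_one, eval_pow, eval_X, one_pow]
    ring
  obtain ⟨z, hz, -⟩ :=
    hensels_lemma (p := 3) (F := F) (a := 1) (by rw [hF, hF', hder, one_pow]; exact hval)
  exact ⟨z, by simpa [F] using hz⟩

structure IsPadicValExtension (p : ℕ) [Fact p.Prime] {L : Type*} [Field L] [Algebra ℚ_[p] L]
    (v : L → ℚ) : Prop where
  apply_mul : ∀ x y : L, x ≠ 0 → y ≠ 0 → v (x * y) = v x + v y
  min_le_apply_add : ∀ x y : L, x ≠ 0 → y ≠ 0 → x + y ≠ 0 → min (v x) (v y) ≤ v (x + y)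
  apply_algebraMap : ∀ x : ℚ_[p], x ≠ 0 → v (algebraMap ℚ_[p] L x) = x.valuation

namespace IsPadicValExtension

variable {L : Type*} [Field L] {v : L → ℚ}

section Prime

variable {p : ℕ} [Fact p.Prime] [Algebra ℚ_[p] L]

open scoped Classical in
noncomputable def absoluteValue (hv : IsPadicValExtension p v) : AbsoluteValue L ℝ where
  toFun x := if x = 0 then 0 else (p : ℝ) ^ (-(v x : ℝ))
  map_mul' x y := by
    by_cases hx : x = 0
    · simp [hx]
    by_cases hy : y = 0
    · simp [hy]
    simp only [mul_eq_zero, hx, hy, or_self, if_false, hv.apply_mul x y hx hy, Rat.cast_add,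
      neg_add, Real.rpow_add (Nat.cast_pos.mpr (Fact.out : p.Prime).pos)]
  nonneg' x := by
    split_ifs <;> positivity
  eq_zero' x := by
    have hp : (0 : ℝ) < p := Nat.cast_pos.mpr (Fact.out : p.Prime).pos
    split_ifs with hx <;> simp [hx, (Real.rpow_pos_of_pos hp _).ne']
  add_le' x y := by
    have hp : (1 : ℝ) < p := mod_cast (Fact.out : p.Prime).one_lt
    have hmono : ∀ a b : ℚ, a ≤ b → (p : ℝ) ^ (-(b : ℝ)) ≤ (p : ℝ) ^ (-(a : ℝ)) := fun a b hab =>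
      Real.rpow_le_rpow_of_exponent_le hp.le (by simpa using hab)
    by_cases hx : x = 0
    · simp [hx]
    by_cases hy : y = 0
    · simp [hy]
    have hpx := Real.rpow_pos_of_pos (by linarith : (0 : ℝ) < p) (-(v x : ℝ))
    have hpy := Real.rpow_pos_of_pos (by linarith : (0 : ℝ) < p) (-(v y : ℝ))
    by_cases hxy : x + y = 0
    · simp only [hxy, hx, hy, if_true, if_false]
      positivity
    simp only [hx, hy, hxy, if_false]
    rcases min_le_iff.mp (hv.min_le_apply_add x y hx hy hxy) with h | h
    · linarith [hmono _ _ h]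
    · linarith [hmono _ _ h]

theorem absoluteValue_of_ne_zero (hv : IsPadicValExtension p v) {x : L} (hx : x ≠ 0) :
    hv.absoluteValue x = (p : ℝ) ^ (-(v x : ℝ)) :=
  if_neg hx

theorem absoluteValue_algebraMap (hv : IsPadicValExtension p v) (q : ℚ_[p]) :
    hv.absoluteValue (algebraMap ℚ_[p] L q) = ‖q‖ := by
  rcases eq_or_ne q 0 with rfl | hq
  · simp
  rw [hv.absoluteValue_of_ne_zero (by simpa using hq), hv.apply_algebraMap q hq,
    Padic.norm_eq_zpow_neg_valuation hq, ← Real.rpow_intCast]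
  push_cast
  rfl

theorem eq_of_absoluteValue_eq (hv : IsPadicValExtension p v) {x y : L} (hx : x ≠ 0)
    (hy : y ≠ 0) (h : hv.absoluteValue x = hv.absoluteValue y) : v x = v y := by
  have hp : (1 : ℝ) < p := mod_cast (Fact.out : p.Prime).one_lt
  rw [hv.absoluteValue_of_ne_zero hx, hv.absoluteValue_of_ne_zero hy,
    Real.rpow_right_inj (by linarith) hp.ne', neg_inj] at h
  exact_mod_cast h

theorem apply_neg (hv : IsPadicValExtension p v) {x : L} (hx : x ≠ 0) : v (-x) = v x :=
  hv.eq_of_absoluteValue_eq (neg_ne_zero.mpr hx) hx (AbsoluteValue.map_neg _ x)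

theorem apply_pow (hv : IsPadicValExtension p v) {x : L} (hx : x ≠ 0) (n : ℕ) :
    v (x ^ n) = n * v x := by
  induction n with
  | zero => simpa using hv.apply_algebraMap 1 one_ne_zero
  | succ n ih =>
    rw [pow_succ, hv.apply_mul _ _ (pow_ne_zero n hx) hx, ih]
    push_cast
    ring

theorem apply_prod (hv : IsPadicValExtension p v) {ι : Type*} (s : Finset ι) {g : ι → L}
    (hg : ∀ i ∈ s, g i ≠ 0) : v (∏ i ∈ s, g i) = ∑ i ∈ s, v (g i) := by
  classical
  induction s using Finset.induction_on with
  | empty => simpa using hv.apply_algebraMap 1 one_ne_zero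
  | insert i s hi ih =>
    rw [Finset.prod_insert hi, Finset.sum_insert hi, hv.apply_mul _ _ (hg i (by simp)),
      ih fun j hj => hg j (by simp [hj])]
    exact Finset.prod_ne_zero_iff.mpr fun j hj => hg j (by simp [hj])

/-- An absolute value extending that of `ℚ_[p]` is the spectral norm, which is Galois
invariant. -/
theorem apply_algEquiv (hv : IsPadicValExtension p v) [Algebra.IsAlgebraic ℚ_[p] L]
    (σ : Gal(L/ℚ_[p])) {x : L} (hx : x ≠ 0) : v (σ x) = v x :=
  hv.eq_of_absoluteValue_eq (by simpa using hx) hx <| by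
    rw [spectralNorm_unique_field_norm_ext hv.absoluteValue_algebraMap,
      spectralNorm_unique_field_norm_ext hv.absoluteValue_algebraMap,
      ← spectralNorm_eq_of_equiv]

theorem valuation_norm (hv : IsPadicValExtension p v) [FiniteDimensional ℚ_[p] L]
    [IsGalois ℚ_[p] L] {x : L} (hx : x ≠ 0) :
    ((Algebra.norm ℚ_[p] x).valuation : ℚ) = finrank ℚ_[p] L * v x := by
  have hσx : ∀ σ : Gal(L/ℚ_[p]), σ x ≠ 0 := fun σ => by simpa using hx
  rw [← hv.apply_algebraMap _ (Algebra.norm_ne_zero_iff.mpr hx),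
    Algebra.norm_eq_prod_automorphisms, hv.apply_prod _ fun σ _ => hσx σ,
    Finset.sum_congr rfl fun σ _ => hv.apply_algEquiv σ hx, Finset.sum_const, Finset.card_univ,
    ← Nat.card_eq_fintype_card, IsGalois.card_aut_eq_finrank, nsmul_eq_mul]

theorem two_mul_le_valuation (hv : IsPadicValExtension p v) {α β : ℚ_[p]} {θ : L}
    (hθ : θ ^ 3 + algebraMap ℚ_[p] L α * θ + algebraMap ℚ_[p] L β = 0) (hθ0 : θ ≠ 0)
    (hα : α ≠ 0) (hβ : β ≠ 0) (hβv : (β.valuation : ℚ) = 3 * v θ) :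
    2 * v θ ≤ α.valuation := by
  have hαθ : algebraMap ℚ_[p] L α * θ ≠ 0 := mul_ne_zero (by simpa using hα) hθ0
  have heq : algebraMap ℚ_[p] L β + θ ^ 3 = -(algebraMap ℚ_[p] L α * θ) := by
    linear_combination hθ
  have h := hv.min_le_apply_add _ _ (by simpa using hβ) (pow_ne_zero 3 hθ0)
    (heq ▸ neg_ne_zero.mpr hαθ)
  rw [heq, hv.apply_neg hαθ, hv.apply_mul _ _ (by simpa using hα) hθ0, hv.apply_algebraMap _ hα,
    hv.apply_algebraMap _ hβ, hv.apply_pow hθ0, hβv] at h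
  push_cast at h
  rw [min_self] at h
  linarith

end Prime

variable [Algebra ℚ_[3] L] [FiniteDimensional ℚ_[3] L] [IsGalois ℚ_[3] L]

theorem exists_eq_intCast_of_toZMod_eq_neg_one (hv : IsPadicValExtension 3 v)
    (hL : finrank ℚ_[3] L = 3) {σ : Gal(L/ℚ_[3])} (hσ : σ ≠ 1) {A u : ℤ_[3]}
    (hA : PadicInt.toZMod A = -1) (hu : PadicInt.toZMod u = 1) {η : L}
    (hη : η ^ 3 + algebraMap ℚ_[3] L A * η + algebraMap ℚ_[3] L u = 0)
    (hgen : IntermediateField.adjoin ℚ_[3] {η} = ⊤) {x : L} (hx : x ≠ 0) :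
    ∃ k : ℤ, v x = k := by
  obtain ⟨a, b, c, rfl⟩ := exists_eq_add_mul_add_mul_sq hη hgen x
  obtain ⟨z, hz, a', b', c', rfl, rfl, rfl, h1⟩ : ∃ z ≠ 0, ∃ a' b' c' : ℤ_[3],
      a = z * a' ∧ b = z * b' ∧ c = z * c' ∧ (a' = 1 ∨ b' = 1 ∨ c' = 1) := by
    refine Padic.exists_eq_mul_padicInt ?_
    by_contra! h
    obtain ⟨rfl, rfl, rfl⟩ := h
    simp at hx
  set y := algebraMap ℚ_[3] L a' + algebraMap ℚ_[3] L b' * η + algebraMap ℚ_[3] L c' * η ^ 2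
  have hxy : algebraMap ℚ_[3] L (z * a') + algebraMap ℚ_[3] L (z * b') * η +
      algebraMap ℚ_[3] L (z * c') * η ^ 2 = algebraMap ℚ_[3] L z * y := by
    simp only [y, RingHom.map_mul]
    ring
  rw [hxy] at hx ⊢
  have hy : y ≠ 0 := right_ne_zero_of_mul hx
  have hF : PadicInt.toZMod (cubicNormForm A u a' b' c') ≠ 0 := by
    rw [map_cubicNormForm, hA, hu]
    intro h
    obtain ⟨ha, hb, hc⟩ := cubicNormForm_anisotropic_zmod_three _ _ _ h
    rcases h1 with rfl | rfl | rfl <;> simp_all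
  have hNy : Algebra.norm ℚ_[3] y = (cubicNormForm A u a' b' c' : ℤ_[3]) := by
    rw [norm_eq_cubicNormForm hL hσ hη (apply_ne_self_of_adjoin_eq_top hσ hgen)]
    exact (map_cubicNormForm PadicInt.Coe.ringHom _ _ _ _ _).symm
  have hNy1 : ‖Algebra.norm ℚ_[3] y‖ = 1 := by
    rw [hNy, ← PadicInt.norm_def]
    exact PadicInt.norm_eq_one_of_toZMod_ne_zero hF
  have hvy : v y = 0 := by
    have h := hv.valuation_norm hy
    rw [(Padic.norm_eq_one_iff_valuation_eq_zero (Algebra.norm_ne_zero_iff.mpr hy)).mp hNy1,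
      hL] at h
    push_cast at h
    linarith
  refine ⟨z.valuation, ?_⟩
  rw [hv.apply_mul _ _ (by simpa using hz) hy, hv.apply_algebraMap _ hz, hvy, add_zero]

theorem exists_eq_intCast_of_toZMod_ne_zero (hv : IsPadicValExtension 3 v)
    (hL : finrank ℚ_[3] L = 3) {σ : Gal(L/ℚ_[3])} (hσ : σ ≠ 1) {α β : ℚ_[3]}
    (hirr : Irreducible (X ^ 3 + C α * X + C β)) {θ : L}
    (hθ : θ ^ 3 + algebraMap ℚ_[3] L α * θ + algebraMap ℚ_[3] L β = 0)
    (hgen : IntermediateField.adjoin ℚ_[3] {θ} = ⊤) {t : ℚ_[3]} (ht : t ≠ 0) {A u : ℤ_[3]}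
    (hαA : α = A * t ^ 2) (hβu : β = u * t ^ 3) (hA : PadicInt.toZMod A ≠ 0)
    (hu : PadicInt.toZMod u = 1) {x : L} (hx : x ≠ 0) :
    ∃ k : ℤ, v x = k := by
  rcases (by decide : ∀ a : ZMod 3, a ≠ 0 → a = 1 ∨ a = -1) _ hA with hA1 | hA1
  · obtain ⟨z, hz⟩ := exists_root_of_toZMod_eq_one hA1 hu
    refine absurd ?_ (not_isRoot_of_irreducible_cubic hirr (t * z))
    have hz' := congrArg ((↑) : ℤ_[3] → ℚ_[3]) hz
    push_cast at hz'
    rw [hαA, hβu]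
    linear_combination t ^ 3 * hz'
  set s := algebraMap ℚ_[3] L t
  have hs : s ≠ 0 := by simpa [s] using ht
  set η := θ / s
  have hθη : θ = s * η := (mul_div_cancel₀ θ hs).symm
  have hη : η ^ 3 + algebraMap ℚ_[3] L A * η + algebraMap ℚ_[3] L u = 0 := by
    have hα' : algebraMap ℚ_[3] L α = algebraMap ℚ_[3] L A * s ^ 2 := by
      rw [hαA, map_mul, map_pow]
    have hβ' : algebraMap ℚ_[3] L β = algebraMap ℚ_[3] L u * s ^ 3 := by
      rw [hβu, map_mul, map_pow]
    rw [hθη, hα', hβ'] at hθ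
    refine (mul_eq_zero.mp (?_ : s ^ 3 * _ = 0)).resolve_left (pow_ne_zero 3 hs)
    linear_combination hθ
  have hgenη : IntermediateField.adjoin ℚ_[3] {η} = ⊤ := by
    refine eq_top_iff.mpr (hgen ▸ IntermediateField.adjoin_simple_le_iff.mpr ?_)
    rw [hθη]
    exact mul_mem (IntermediateField.algebraMap_mem _ t)
      (IntermediateField.mem_adjoin_simple_self _ η)
  exact hv.exists_eq_intCast_of_toZMod_eq_neg_one hL hσ hA1 hu hη hgenη hx

theorem valuation_ne_two_mul (hv : IsPadicValExtension 3 v)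
    (hL : finrank ℚ_[3] L = 3) {σ : Gal(L/ℚ_[3])} (hσ : σ ≠ 1) {α β : ℚ_[3]}
    (hirr : Irreducible (X ^ 3 + C α * X + C β)) {θ : L}
    (hθ : θ ^ 3 + algebraMap ℚ_[3] L α * θ + algebraMap ℚ_[3] L β = 0)
    (hgen : IntermediateField.adjoin ℚ_[3] {θ} = ⊤) (hram : ∃ x : L, x ≠ 0 ∧ ∀ k : ℤ, v x ≠ k)
    {m : ℤ} {u : ℤ_[3]} (hβu : β = u * ((3 : ℚ_[3]) ^ m) ^ 3) (hu : PadicInt.toZMod u = 1)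
    (hα0 : α ≠ 0) : α.valuation ≠ 2 * m := by
  have ht : (3 : ℚ_[3]) ^ m ≠ 0 := zpow_ne_zero m (by norm_num)
  intro h2m
  set A := α / ((3 : ℚ_[3]) ^ m) ^ 2
  have hA1 : ‖A‖ = 1 := by
    refine (Padic.norm_eq_one_iff_valuation_eq_zero (div_ne_zero hα0 (pow_ne_zero 2 ht))).mpr ?_
    rw [div_eq_mul_inv, Padic.valuation_mul hα0 (by simp [ht])]
    simp [h2m]
  obtain ⟨x, hx, hxv⟩ := hram
  obtain ⟨k, hk⟩ := hv.exists_eq_intCast_of_toZMod_ne_zero hL hσ hirr hθ hgen ht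
    (A := ⟨A, hA1.le⟩) (by simp [A, div_mul_cancel₀ _ (pow_ne_zero 2 ht)]) hβu
    (mt PadicInt.norm_lt_one_iff_toZMod_eq_zero.mpr (by simp [hA1])) hu hx
  exact hxv k hk

theorem valuation_eq_two_mul_add_one (hv : IsPadicValExtension 3 v)
    (hL : finrank ℚ_[3] L = 3) {σ : Gal(L/ℚ_[3])} (hσ : σ ≠ 1) {α β : ℚ_[3]}
    (hirr : Irreducible (X ^ 3 + C α * X + C β)) {θ : L}
    (hθ : θ ^ 3 + algebraMap ℚ_[3] L α * θ + algebraMap ℚ_[3] L β = 0)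
    (hgen : IntermediateField.adjoin ℚ_[3] {θ} = ⊤) (hram : ∃ x : L, x ≠ 0 ∧ ∀ k : ℤ, v x ≠ k)
    {m : ℤ} {u : ℤ_[3]} (hβu : β = u * ((3 : ℚ_[3]) ^ m) ^ 3) (hu : PadicInt.toZMod u = 1) :
    α.valuation = 2 * m + 1 := by
  have hσθ := apply_ne_self_of_adjoin_eq_top hσ hgen
  have ht : (3 : ℚ_[3]) ^ m ≠ 0 := zpow_ne_zero m (by norm_num)
  have hu0 : (u : ℚ_[3]) ≠ 0 := by rintro h; simp [PadicInt.coe_eq_zero.mp h] at hu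
  have hβ0 : β ≠ 0 := by rw [hβu]; exact mul_ne_zero hu0 (pow_ne_zero 3 ht)
  have hm : β.valuation = 3 * m := by
    rw [hβu, Padic.valuation_mul hu0 (pow_ne_zero 3 ht),
      (Padic.norm_eq_one_iff_valuation_eq_zero hu0).mp
        (PadicInt.norm_eq_one_of_toZMod_ne_zero (by simp [hu]))]
    simp
  have hθ0 : θ ≠ 0 := by
    rintro rfl
    simp [hβ0] at hθ
  have hvθ : (β.valuation : ℚ) = 3 * v θ := by
    have hN : Algebra.norm ℚ_[3] θ = -β := by
      simpa using norm_root_add_algebraMap hL hσ hθ hσθ 0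
    have h := hv.valuation_norm hθ0
    rwa [hN, Padic.valuation_neg, hL, Nat.cast_ofNat] at h
  obtain ⟨hα0, hle⟩ :=
    Padic.valuation_le_of_sq_eq_neg_disc (norm_root_sub_conj_sq hL hσ hθ hσθ) hβ0 hm
  have hge : 2 * m ≤ α.valuation := by
    have h := hv.two_mul_le_valuation hθ hθ0 hα0 hβ0 hvθ
    rw [hm] at hvθ
    push_cast at hvθ
    exact_mod_cast (by push_cast; linarith : ((2 * m : ℤ) : ℚ) ≤ α.valuation)
  have hne := hv.valuation_ne_two_mul hL hσ hirr hθ hgen hram hβu hu hα0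
  omega

end IsPadicValExtension

theorem stmt_18_general (α β : ℚ_[3])
    (hirr : Irreducible (X ^ 3 + C α * X + C β : Polynomial ℚ_[3]))
    (L : Type) [Field L] [Algebra ℚ_[3] L] [FiniteDimensional ℚ_[3] L]
    (θ : L) (hroot : Polynomial.aeval θ (X ^ 3 + C α * X + C β : Polynomial ℚ_[3]) = 0)
    (hgen : IntermediateField.adjoin ℚ_[3] {θ} = ⊤)
    [IsGalois ℚ_[3] L]
    (v : L → ℚ)
    (hmul : ∀ x y : L, x ≠ 0 → y ≠ 0 → v (x * y) = v x + v y)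
    (hadd : ∀ x y : L, x ≠ 0 → y ≠ 0 → x + y ≠ 0 → min (v x) (v y) ≤ v (x + y))
    (hext : ∀ x : ℚ_[3], x ≠ 0 → v (algebraMap ℚ_[3] L x) = (x.valuation : ℚ))
    (hram : ∃ x : L, x ≠ 0 ∧ ∀ m : ℤ, v x ≠ (m : ℚ))
    (m : ℤ)
    (u w : ℚ_[3])
    (hu : u = β / (3 : ℚ_[3]) ^ (3 * m)) (hw : w = α / (3 : ℚ_[3]) ^ (2 * m + 1))
    (hu1 : ∃ c : ℤ_[3], u - 1 = 9 * (c : ℚ_[3])) :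
    Algebra.norm ℚ_[3] (θ + algebraMap ℚ_[3] L ((3 : ℚ_[3]) ^ m)) * (3 : ℚ_[3]) ^ (-(3 * m)) =
        1 - u + 3 * w ∧
      (1 - u + 3 * w).valuation = 1 ∧
      ¬ ∃ c : ℚ_[3], c ^ 3 = 1 - u + 3 * w := by
  have hθ : θ ^ 3 + algebraMap ℚ_[3] L α * θ + algebraMap ℚ_[3] L β = 0 := by simpa using hroot
  have hL := finrank_eq_three_of_irreducible_cubic hirr hroot hgen
  obtain ⟨σ, hσ⟩ := exists_algEquiv_ne_one (K := ℚ_[3]) (L := L) (by rw [hL]; norm_num)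
  obtain ⟨c, hc⟩ := hu1
  set t := (3 : ℚ_[3]) ^ m
  have ht : t ≠ 0 := zpow_ne_zero m (by norm_num)
  have h3m : (3 : ℚ_[3]) ^ (3 * m) = t ^ 3 := by rw [mul_comm, zpow_mul]; norm_cast
  have h2m1 : (3 : ℚ_[3]) ^ (2 * m + 1) = 3 * t ^ 2 := by
    rw [zpow_add_one₀ (by norm_num), mul_comm 2 m, zpow_mul]; norm_cast; ring
  have hβ : β = ((1 + 9 * c : ℤ_[3]) : ℚ_[3]) * t ^ 3 := by
    rw [hu, h3m] at hc
    field_simp at hc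
    push_cast [show ((9 : ℤ_[3]) : ℚ_[3]) = 9 by norm_cast]
    linear_combination hc
  have hα := IsPadicValExtension.valuation_eq_two_mul_add_one ⟨hmul, hadd, hext⟩ hL hσ hirr hθ
    hgen hram hβ (by simp [map_ofNat, show (9 : ZMod 3) = 0 by decide])
  have hα0 : α ≠ 0 := fun h => by simp [h] at hα; omega
  have hw1 : ‖w‖ = 1 := by simpa [hw, hα] using Padic.norm_div_zpow_valuation hα0
  have hD : (1 - u + 3 * w).valuation = 1 := by
    rw [show 1 - u + 3 * w = 3 * w + 9 * ((-c : ℤ_[3]) : ℚ_[3]) by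
      push_cast; linear_combination -hc]
    exact Padic.valuation_three_mul_add_nine_mul hw1 (-c)
  refine ⟨?_, hD, fun ⟨x, hx⟩ => ?_⟩
  · rw [norm_root_add_algebraMap hL hσ hθ (apply_ne_self_of_adjoin_eq_top hσ hgen), hu, hw, h3m,
      h2m1, zpow_neg, h3m]
    field_simp
    ring
  · have h := congrArg Padic.valuation hx
    rw [Padic.valuation_pow, hD] at h
    omega

/-- For an irreducible depressed cubic `x³ + αx + β` over `ℚ₃` generating a ramified
Galois extension, with `v₃(β) = 3m`, unit part `u = 3^{-3m}β ≡ 1 (mod 9)`, and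
`w = 3^{-(2m+1)}α`: `N(θ + 3^m)·3^{-3m} = 1 - u + 3w`, which has valuation exactly 1
(hence is not a cube in `ℚ₃`). -/
theorem stmt_18 (α β : ℚ_[3])
    (hirr : Irreducible (X ^ 3 + C α * X + C β : Polynomial ℚ_[3]))
    (L : Type) [Field L] [Algebra ℚ_[3] L] [FiniteDimensional ℚ_[3] L]
    (θ : L) (hroot : Polynomial.aeval θ (X ^ 3 + C α * X + C β : Polynomial ℚ_[3]) = 0)
    (hgen : IntermediateField.adjoin ℚ_[3] {θ} = ⊤)
    [IsGalois ℚ_[3] L]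
    (v : L → ℚ)
    (hmul : ∀ x y : L, x ≠ 0 → y ≠ 0 → v (x * y) = v x + v y)
    (hadd : ∀ x y : L, x ≠ 0 → y ≠ 0 → x + y ≠ 0 → min (v x) (v y) ≤ v (x + y))
    (hext : ∀ x : ℚ_[3], x ≠ 0 → v (algebraMap ℚ_[3] L x) = (x.valuation : ℚ))
    (hram : ∃ x : L, x ≠ 0 ∧ ∀ m : ℤ, v x ≠ (m : ℚ))
    (m : ℤ) (hm : β.valuation = 3 * m)
    (u w : ℚ_[3])
    (hu : u = β / (3 : ℚ_[3]) ^ (3 * m)) (hw : w = α / (3 : ℚ_[3]) ^ (2 * m + 1))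
    (hu1 : ∃ c : ℤ_[3], u - 1 = 9 * (c : ℚ_[3])) :
    Algebra.norm ℚ_[3] (θ + algebraMap ℚ_[3] L ((3 : ℚ_[3]) ^ m)) * (3 : ℚ_[3]) ^ (-(3 * m)) =
        1 - u + 3 * w ∧
      (1 - u + 3 * w).valuation = 1 ∧
      ¬ ∃ c : ℚ_[3], c ^ 3 = 1 - u + 3 * w :=
  stmt_18_general α β hirr L θ hroot hgen v hmul hadd hext hram m u w hu hw hu1
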